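/- Suppose S = {s_1 < ⋯ < s_r} is an n-admissible set. Let S_1 = S ∖ {s_r}, k = s_r − 1, and S_2 = S_1 ∪ {k}. Then P_S(n,q) = [n choose k]_q · P_{S_1}(k,q) · (−q;q)_{n−k−1} − P_{S_1}(n,q) − P_{S_2}(n,q). -/

import Mathlib

/-!
Cutting a permutation `π` of `Fin (k + m)` after position `k` identifies it with the set `A` of
its first `k` values together with the relative orders `σ`, `τ` of its two blocks, and
`ℓ(π) = ℓ(σ) + ℓ(τ) + cross A`, where `cross A` counts the pairs `b < a` with `a ∈ A`, `b ∉ A`.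
Hence `Σ q^ℓ` factorizes over any condition on `π` that splits into conditions on `σ` and `τ`.
Without conditions, `k = 1` gives `Σ_{𝔖_n} q^ℓ = [n]!_q` by induction, and then general `k`
identifies `Σ_A q^{cross A}` with `[k + m choose k]_q`.

Away from the positions `k, k + 1` where the blocks meet, the peaks of `π` are those of `σ` and
those of `τ` shifted by `k`. So if all elements of `S₁` are `< k`, the permutations with
`Peak(π) \ {k, k + 1} = S₁` have generating function `[n choose k]_q P_{S₁}(k,q) Σ q^{ℓ(τ)}`,
summed over peak-free `τ`; as peaks are never adjacent, they are those with peak set `S₁`,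
`S₁ ∪ {k}` or `S₁ ∪ {k + 1}`, and for `k = s_r - 1` the last one is `S`.

A peak-free permutation of `Fin (m + 1)` decreases down to `0` and increases afterwards (on a
window `p < q < r` with `τ q` above both ends, the maximum would be a peak), so it is determined by
the set `B ⊆ {1, …, m}` of values left of `0`; its length is `Σ B`, which gives `(−q;q)_m`.
-/

open Polynomial Finset

noncomputable section

/-- The number of inversions (the Coxeter length) of a permutation of `Fin n`. -/
def invNum {n : ℕ} (π : Equiv.Perm (Fin n)) : ℕ :=
  (Finset.univ.filter fun p : Fin n × Fin n => p.1 < p.2 ∧ π p.2 < π p.1).card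

/-- The descent set of a permutation, as a set of positive integers (1-indexed positions):
`i ∈ Des(π)` iff `1 ≤ i ≤ n-1` and `π_i > π_{i+1}` in one-line notation. -/
def DesSet {n : ℕ} (π : Equiv.Perm (Fin n)) : Finset ℕ :=
  (Finset.univ.filter fun a : Fin n => ∃ b : Fin n, (a : ℕ) + 1 = (b : ℕ) ∧ π b < π a).image
    fun a : Fin n => (a : ℕ) + 1

/-- The peak set of a permutation (1-indexed positions):
`i ∈ Peak(π)` iff `2 ≤ i ≤ n-1` and `π_{i-1} < π_i > π_{i+1}` in one-line notation. -/
def PeakSet {n : ℕ} (π : Equiv.Perm (Fin n)) : Finset ℕ :=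
  (Finset.univ.filter fun b : Fin n =>
      ∃ a c : Fin n, (a : ℕ) + 1 = (b : ℕ) ∧ (b : ℕ) + 1 = (c : ℕ) ∧ π a < π b ∧ π c < π b).image
    fun b : Fin n => (b : ℕ) + 1

/-- The q-integer `[j]_q = 1 + q + ⋯ + q^(j-1)`. -/
def qNum (j : ℕ) : Polynomial ℝ := ∑ i ∈ Finset.range j, X ^ i

/-- The q-factorial `[n]!_q = [1]_q [2]_q ⋯ [n]_q`. -/
def qFactorial : ℕ → Polynomial ℝ
  | 0 => 1
  | n + 1 => qFactorial n * qNum (n + 1)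

/-- The q-binomial coefficient `[n choose k]_q = [n]!_q / ([k]!_q [n-k]!_q)`.
(The divisor is monic and the division is exact, so `divByMonic` gives the true quotient.) -/
def qBinom (n k : ℕ) : Polynomial ℝ :=
  qFactorial n /ₘ (qFactorial k * qFactorial (n - k))

/-- `(−q;q)_k = (1+q)(1+q²)⋯(1+q^k)`. -/
def qPoch (k : ℕ) : Polynomial ℝ := ∏ i ∈ Finset.range k, (1 + X ^ (i + 1))

/-- `D_S(n,q) = Σ_{π ∈ 𝔖_n, Des(π) = S} q^{ℓ(π)}`. -/
def Dpoly (S : Finset ℕ) (n : ℕ) : Polynomial ℝ :=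
  ∑ π ∈ Finset.univ.filter (fun π : Equiv.Perm (Fin n) => DesSet π = S), X ^ invNum π

/-- `P_S(n,q) = Σ_{π ∈ 𝔖_n, Peak(π) = S} q^{ℓ(π)}`. -/
def Ppoly (S : Finset ℕ) (n : ℕ) : Polynomial ℝ :=
  ∑ π ∈ Finset.univ.filter (fun π : Equiv.Perm (Fin n) => PeakSet π = S), X ^ invNum π

/-- `Q_S(n,q) = Σ_{π ∈ 𝔖_n, Peak(π) ⊇ S} q^{ℓ(π)}`. -/
def Qpoly (S : Finset ℕ) (n : ℕ) : Polynomial ℝ :=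
  ∑ π ∈ Finset.univ.filter (fun π : Equiv.Perm (Fin n) => S ⊆ PeakSet π), X ^ invNum π

/-- The sequence `(a i)` for `lo ≤ i ≤ hi` is strongly q-log concave: it has no internal
zeroes and `a i * a j - a (i-1) * a (j+1)` has nonnegative coefficients for `lo < i ≤ j < hi`. -/
def StronglyQLogConcave (lo hi : ℕ) (a : ℕ → Polynomial ℝ) : Prop :=
  (∀ i j l : ℕ, lo ≤ i → i < j → j < l → l ≤ hi → a i ≠ 0 → a l ≠ 0 → a j ≠ 0) ∧
  ∀ i j : ℕ, lo < i → i ≤ j → j < hi → ∀ m : ℕ,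
    0 ≤ (a i * a j - a (i - 1) * a (j + 1)).coeff m

open Equiv

section Peaks

variable {n : ℕ}

theorem mem_peakSet {π : Perm (Fin n)} {x : ℕ} :
    x ∈ PeakSet π ↔ ∃ a b c : Fin n, (a : ℕ) + 1 = b ∧ (b : ℕ) + 1 = c ∧
      π a < π b ∧ π c < π b ∧ x = (b : ℕ) + 1 := by
  simp only [PeakSet, mem_image, mem_filter, mem_univ, true_and]
  constructor
  · rintro ⟨b, ⟨a, c, h⟩, rfl⟩
    exact ⟨a, b, c, by simpa using h⟩
  · rintro ⟨a, b, c, hab, hbc, hπa, hπc, rfl⟩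
    exact ⟨b, ⟨a, c, hab, hbc, hπa, hπc⟩, rfl⟩

theorem two_le_of_mem_peakSet {π : Perm (Fin n)} {x : ℕ} (h : x ∈ PeakSet π) : 2 ≤ x := by
  obtain ⟨a, b, c, hab, -, -, -, rfl⟩ := mem_peakSet.1 h
  omega

theorem lt_of_mem_peakSet {π : Perm (Fin n)} {x : ℕ} (h : x ∈ PeakSet π) : x < n := by
  obtain ⟨a, b, c, -, hbc, -, -, rfl⟩ := mem_peakSet.1 h
  omega

theorem add_one_notMem_peakSet {π : Perm (Fin n)} {x : ℕ} (h : x ∈ PeakSet π) :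
    x + 1 ∉ PeakSet π := by
  intro h'
  obtain ⟨a, b, c, hab, hbc, -, hc, rfl⟩ := mem_peakSet.1 h
  obtain ⟨a', b', c', hab', -, ha', -, hb'⟩ := mem_peakSet.1 h'
  obtain rfl : a' = b := Fin.ext (by omega)
  obtain rfl : b' = c := Fin.ext (by omega)
  exact lt_asymm hc ha'

theorem add_mem_peakSet_iff {k o : ℕ} {π : Perm (Fin n)} {σ : Perm (Fin k)} {e f : Fin k → Fin n}
    (he : ∀ i, (e i : ℕ) = o + i) (hf : StrictMono f) (hπ : ∀ i, π (e i) = f (σ i))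
    {x : ℕ} (hx2 : 2 ≤ x) (hx : x < k) : o + x ∈ PeakSet π ↔ x ∈ PeakSet σ := by
  rw [mem_peakSet, mem_peakSet]
  constructor
  · rintro ⟨a, b, c, hab, hbc, hπa, hπc, hx'⟩
    have pos : ∀ (p : Fin n) (i : ℕ), i < k → (p : ℕ) = o + i → ∃ j, p = e j :=
      fun p i hi hp => ⟨⟨i, hi⟩, Fin.ext (by rw [he]; exact hp)⟩
    obtain ⟨a, rfl⟩ := pos a (x - 2) (by omega) (by omega)
    obtain ⟨b, rfl⟩ := pos b (x - 1) (by omega) (by omega)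
    obtain ⟨c, rfl⟩ := pos c x hx (by omega)
    simp only [he, hπ, hf.lt_iff_lt] at hab hbc hπa hπc hx'
    exact ⟨a, b, c, by omega, by omega, hπa, hπc, by omega⟩
  · rintro ⟨a, b, c, hab, hbc, hσa, hσc, rfl⟩
    refine ⟨e a, e b, e c, ?_, ?_, ?_, ?_, ?_⟩ <;> simp only [he, hπ, hf.lt_iff_lt] <;> omega

end Peaks

section Shuffle

variable {k m : ℕ}

theorem card_compl_of_card_eq {A : Finset (Fin (k + m))} (hA : #A = k) : #Aᶜ = m := by
  rw [card_compl, Fintype.card_fin, hA, Nat.add_sub_cancel_left]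

/-- The permutation whose first `k` values are the elements of `A` arranged in the relative
order `σ`, and whose last `m` values are the elements of `Aᶜ` arranged in the relative order `τ`. -/
def shuffle (A : {A : Finset (Fin (k + m)) // #A = k}) (σ : Perm (Fin k)) (τ : Perm (Fin m)) :
    Perm (Fin (k + m)) :=
  finSumFinEquiv.symm.trans <|
    (σ.sumCongr τ).trans (finSumEquivOfFinset A.2 (card_compl_of_card_eq A.2))

section

variable (A : {A : Finset (Fin (k + m)) // #A = k}) (σ : Perm (Fin k)) (τ : Perm (Fin m))

@[simp]
theorem shuffle_castAdd (i : Fin k) :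
    shuffle A σ τ (Fin.castAdd m i) = A.1.orderEmbOfFin A.2 (σ i) := by
  simp [shuffle]

@[simp]
theorem shuffle_natAdd (j : Fin m) :
    shuffle A σ τ (Fin.natAdd k j) = A.1ᶜ.orderEmbOfFin (card_compl_of_card_eq A.2) (τ j) := by
  simp [shuffle]

theorem image_shuffle_castAdd : univ.image (fun i => shuffle A σ τ (Fin.castAdd m i)) = A.1 := by
  have h : (fun i => shuffle A σ τ (Fin.castAdd m i)) = A.1.orderEmbOfFin A.2 ∘ σ :=
    funext (shuffle_castAdd A σ τ)
  rw [← coe_inj, coe_image, coe_univ, Set.image_univ, h, σ.surjective.range_comp,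
    range_orderEmbOfFin]

end

theorem shuffle_injective :
    Function.Injective fun t : {A : Finset (Fin (k + m)) // #A = k} × Perm (Fin k) × Perm (Fin m) =>
      shuffle t.1 t.2.1 t.2.2 := by
  rintro ⟨A, σ, τ⟩ ⟨A', σ', τ'⟩ h
  dsimp only at h
  obtain rfl : A = A' :=
    Subtype.ext (by rw [← image_shuffle_castAdd A σ τ, h, image_shuffle_castAdd])
  have hσ : σ = σ' := Equiv.ext fun i => (A.1.orderEmbOfFin A.2).injective <| by
    simpa using DFunLike.congr_fun h (Fin.castAdd m i)
  have hτ : τ = τ' := Equiv.ext fun j =>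
      (A.1ᶜ.orderEmbOfFin (card_compl_of_card_eq A.2)).injective <| by
    simpa using DFunLike.congr_fun h (Fin.natAdd k j)
  rw [hσ, hτ]

def shuffleEquiv :
    {A : Finset (Fin (k + m)) // #A = k} × Perm (Fin k) × Perm (Fin m) ≃ Perm (Fin (k + m)) :=
  Equiv.ofBijective _ <| (Fintype.bijective_iff_injective_and_card _).2 ⟨shuffle_injective, by
    simp [Fintype.card_finset_len, Fintype.card_perm, ← Nat.choose_mul_factorial_mul_factorial
      (Nat.le_add_right k m), mul_assoc]⟩

end Shuffle

theorem invNum_eq_sum {n : ℕ} (π : Perm (Fin n)) :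
    invNum π = ∑ i, ∑ j, if i < j ∧ π j < π i then 1 else 0 := by
  rw [invNum, card_filter, ← Fintype.sum_prod_type']

theorem sum_orderEmbOfFin {α M : Type*} [LinearOrder α] [AddCommMonoid M] (s : Finset α) {k : ℕ}
    (h : #s = k) (f : α → M) : ∑ i, f (s.orderEmbOfFin h i) = ∑ a ∈ s, f a := by
  conv_rhs => rw [← map_orderEmbOfFin_univ s h, sum_map]
  rfl

def crossNum {n : ℕ} (A : Finset (Fin n)) : ℕ := ∑ a ∈ A, #{b ∈ Aᶜ | b < a}

theorem invNum_shuffle {k m : ℕ} (A : {A : Finset (Fin (k + m)) // #A = k}) (σ : Perm (Fin k))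
    (τ : Perm (Fin m)) : invNum (shuffle A σ τ) = invNum σ + invNum τ + crossNum A.1 := by
  have hcross : ∑ i, ∑ j, (if A.1ᶜ.orderEmbOfFin (card_compl_of_card_eq A.2) (τ j) <
      A.1.orderEmbOfFin A.2 (σ i) then 1 else 0) = crossNum A.1 := by
    rw [Equiv.sum_comp σ (fun i => ∑ j, if A.1ᶜ.orderEmbOfFin (card_compl_of_card_eq A.2) (τ j) <
      A.1.orderEmbOfFin A.2 i then 1 else 0)]
    simp only [crossNum, card_filter, ← sum_orderEmbOfFin A.1 A.2,
      ← sum_orderEmbOfFin A.1ᶜ (card_compl_of_card_eq A.2)]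
    exact sum_congr rfl fun i _ => Equiv.sum_comp τ fun j =>
      if A.1ᶜ.orderEmbOfFin (card_compl_of_card_eq A.2) j < A.1.orderEmbOfFin A.2 i then 1 else 0
  have hcast : ∀ i i' : Fin k, Fin.castAdd m i < Fin.castAdd m i' ↔ i < i' := fun _ _ => Iff.rfl
  have hlt : ∀ i j, Fin.castAdd m i < Fin.natAdd k j := fun i j => by
    rw [Fin.lt_def, Fin.val_castAdd, Fin.val_natAdd]; omega
  have hnlt : ∀ i j, ¬ Fin.natAdd k j < Fin.castAdd m i := fun i j => by
    rw [Fin.lt_def, Fin.val_castAdd, Fin.val_natAdd]; omega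
  simp only [invNum_eq_sum, Fin.sum_univ_add, shuffle_castAdd, shuffle_natAdd, hcast, hlt, hnlt,
    Fin.natAdd_lt_natAdd_iff, OrderEmbedding.lt_iff_lt, true_and, false_and, if_false,
    sum_const_zero, sum_add_distrib, hcross]
  ring

section ShufflePeaks

variable {k m : ℕ} (A : {A : Finset (Fin (k + m)) // #A = k}) (σ : Perm (Fin k))
  (τ : Perm (Fin m))

theorem mem_peakSet_shuffle_of_lt {x : ℕ} (hx : x < k) :
    x ∈ PeakSet (shuffle A σ τ) ↔ x ∈ PeakSet σ := by
  by_cases hx2 : 2 ≤ x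
  · simpa using add_mem_peakSet_iff (o := 0) (e := Fin.castAdd m) (by simp)
      (A.1.orderEmbOfFin A.2).strictMono (shuffle_castAdd A σ τ) hx2 hx
  · exact iff_of_false (hx2 ∘ two_le_of_mem_peakSet) (hx2 ∘ two_le_of_mem_peakSet)

theorem add_mem_peakSet_shuffle {y : ℕ} (hy : 2 ≤ y) :
    k + y ∈ PeakSet (shuffle A σ τ) ↔ y ∈ PeakSet τ := by
  by_cases hym : y < m
  · exact add_mem_peakSet_iff (e := Fin.natAdd k) (Fin.val_natAdd k)
      (A.1ᶜ.orderEmbOfFin (card_compl_of_card_eq A.2)).strictMono (shuffle_natAdd A σ τ) hy hym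
  · exact iff_of_false (fun h => hym (by have := lt_of_mem_peakSet h; omega))
      (fun h => hym (lt_of_mem_peakSet h))

theorem peakSet_shuffle_sdiff :
    PeakSet (shuffle A σ τ) \ {k, k + 1} = PeakSet σ ∪ (PeakSet τ).image (k + ·) := by
  ext x
  simp only [mem_sdiff, mem_insert, mem_singleton, mem_union, mem_image]
  have hσ : x ∈ PeakSet σ → x < k := lt_of_mem_peakSet
  have hτ : ∀ y ∈ PeakSet τ, 2 ≤ y := fun _ => two_le_of_mem_peakSet
  rcases lt_or_ge x k with hx | hx
  · rw [mem_peakSet_shuffle_of_lt A σ τ hx]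
    have : ¬ ∃ y ∈ PeakSet τ, k + y = x := by rintro ⟨y, -, rfl⟩; omega
    simp only [this, or_false, and_iff_left_iff_imp]
    omega
  have hσ' : x ∉ PeakSet σ := fun h => by have := hσ h; omega
  rcases le_or_gt x (k + 1) with hxk | hxk
  · have : ¬ ∃ y ∈ PeakSet τ, k + y = x := by rintro ⟨y, hy, rfl⟩; have := hτ y hy; omega
    have hx' : x = k ∨ x = k + 1 := by omega
    exact iff_of_false (fun h => h.2 hx') (by simpa [hσ'] using this)
  · obtain ⟨y, rfl⟩ : ∃ y, x = k + y := ⟨x - k, by omega⟩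
    have hx' : ¬(k + y = k ∨ k + y = k + 1) := by omega
    rw [add_mem_peakSet_shuffle A σ τ (by omega)]
    simp only [add_right_inj, exists_eq_right]
    tauto

end ShufflePeaks

theorem sum_pow_invNum_filter_eq {R : Type*} [CommSemiring R] (q : R) {k m : ℕ}
    (P : Perm (Fin (k + m)) → Prop) [DecidablePred P]
    (P₁ : Perm (Fin k) → Prop) [DecidablePred P₁] (P₂ : Perm (Fin m) → Prop) [DecidablePred P₂]
    (hP : ∀ A σ τ, P (shuffle A σ τ) ↔ P₁ σ ∧ P₂ τ) :
    ∑ π with P π, q ^ invNum π =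
      (∑ A : {A : Finset (Fin (k + m)) // #A = k}, q ^ crossNum A.1) *
        (∑ σ with P₁ σ, q ^ invNum σ) * ∑ τ with P₂ τ, q ^ invNum τ := by
  calc ∑ π with P π, q ^ invNum π
      = ∑ A : {A : Finset (Fin (k + m)) // #A = k}, ∑ σ, ∑ τ, q ^ crossNum A.1 *
          ((if P₁ σ then q ^ invNum σ else 0) * if P₂ τ then q ^ invNum τ else 0) := by
        rw [sum_filter, ← shuffleEquiv.sum_comp, Fintype.sum_prod_type]
        refine sum_congr rfl fun A _ => ?_
        rw [Fintype.sum_prod_type]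
        refine sum_congr rfl fun σ _ => sum_congr rfl fun τ _ => ?_
        simp only [shuffleEquiv, Equiv.ofBijective_apply, hP, invNum_shuffle, ite_and]
        split_ifs <;> ring
    _ = _ := by
        rw [mul_assoc, sum_filter, sum_filter, sum_mul_sum, sum_mul_sum]
        simp only [mul_sum]

theorem sum_pow_invNum_eq_mul {R : Type*} [CommSemiring R] (q : R) (k m : ℕ) :
    ∑ π : Perm (Fin (k + m)), q ^ invNum π =
      (∑ A : {A : Finset (Fin (k + m)) // #A = k}, q ^ crossNum A.1) *
        (∑ σ : Perm (Fin k), q ^ invNum σ) * ∑ τ : Perm (Fin m), q ^ invNum τ := by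
  simpa using sum_pow_invNum_filter_eq q (fun _ => True) (fun _ => True) (fun _ => True) (by simp)

theorem crossNum_singleton {n : ℕ} (v : Fin n) : crossNum {v} = v := by
  have h : ({b ∈ {v}ᶜ | b < v} : Finset (Fin n)) = Iio v := by
    ext b
    simp only [mem_filter, mem_compl, mem_singleton, mem_Iio, and_iff_right_iff_imp]
    exact ne_of_lt
  rw [crossNum, sum_singleton, h, Fin.card_Iio]

theorem invNum_one {n : ℕ} : invNum (1 : Perm (Fin n)) = 0 := by
  simp only [invNum, Perm.one_apply, card_eq_zero]
  exact filter_eq_empty_iff.2 fun p _ h => lt_asymm h.1 h.2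

theorem sum_pow_invNum : ∀ n, ∑ π : Perm (Fin n), (X : ℝ[X]) ^ invNum π = qFactorial n
  | 0 => by simp [qFactorial, invNum]
  | n + 1 => by
    have hA : ∑ A : {A : Finset (Fin (1 + n)) // #A = 1}, (X : ℝ[X]) ^ crossNum A.1 =
        qNum (1 + n) := by
      rw [← sum_subtype (powersetCard 1 univ) (fun _ => mem_powersetCard_univ)
        (fun A => (X : ℝ[X]) ^ crossNum A), powersetCard_one, sum_map]
      simp [crossNum_singleton, qNum, Fin.sum_univ_eq_sum_range (fun i => (X : ℝ[X]) ^ i)]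
    have h := sum_pow_invNum_eq_mul (X : ℝ[X]) 1 n
    rw [hA, sum_pow_invNum n, Nat.add_comm 1 n] at h
    rw [h, qFactorial]
    simp [invNum_one, mul_comm]

theorem monic_qFactorial : ∀ n, (qFactorial n).Monic
  | 0 => monic_one
  | n + 1 => (monic_qFactorial n).mul (monic_geom_sum_X n.succ_ne_zero)

theorem sum_pow_crossNum (k m : ℕ) :
    ∑ A : {A : Finset (Fin (k + m)) // #A = k}, (X : ℝ[X]) ^ crossNum A.1 = qBinom (k + m) k := by
  have h := sum_pow_invNum_eq_mul (X : ℝ[X]) k m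
  rw [sum_pow_invNum, sum_pow_invNum, sum_pow_invNum] at h
  rw [qBinom, Nat.add_sub_cancel_left, h, mul_assoc, mul_comm,
    mul_divByMonic_cancel_left _ ((monic_qFactorial k).mul (monic_qFactorial m))]

section Valley

variable {n : ℕ}

theorem card_add_card_compl_fin (B : Finset (Fin n)) : #B + #Bᶜ = n := by
  rw [card_add_card_compl, Fintype.card_fin]

/-- The elements of `B` in decreasing order, followed by those of `Bᶜ` in increasing order. -/
def valley (B : Finset (Fin n)) : Perm (Fin n) :=
  (finCongr (card_add_card_compl_fin B).symm).trans <| finSumFinEquiv.symm.trans <|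
    (Fin.revPerm.sumCongr (Equiv.refl _)).trans (finSumEquivOfFinset (s := B) rfl rfl)

variable (B : Finset (Fin n))

theorem valley_apply_of_lt {p : Fin n} (hp : (p : ℕ) < #B) :
    valley B p = B.orderEmbOfFin rfl (Fin.rev ⟨p, hp⟩) := by
  have : finCongr (card_add_card_compl_fin B).symm p = Fin.castAdd #Bᶜ ⟨p, hp⟩ := rfl
  simp only [valley, Equiv.trans_apply, this, finSumFinEquiv_symm_apply_castAdd, sumCongr_apply,
    Sum.map_inl, finSumEquivOfFinset_inl, Fin.revPerm_apply]

theorem valley_apply_of_le {p : Fin n} (hp : #B ≤ p) :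
    valley B p = Bᶜ.orderEmbOfFin rfl
      ⟨p - #B, by have := card_add_card_compl_fin B; omega⟩ := by
  have : finCongr (card_add_card_compl_fin B).symm p =
      Fin.natAdd #B ⟨p - #B, by have := card_add_card_compl_fin B; omega⟩ :=
    Fin.ext (by simp; omega)
  simp only [valley, Equiv.trans_apply, this, finSumFinEquiv_symm_apply_natAdd, sumCongr_apply,
    Sum.map_inr, finSumEquivOfFinset_inr, coe_refl, id]

theorem valley_mem_iff (p : Fin n) : valley B p ∈ B ↔ (p : ℕ) < #B := by
  refine ⟨fun h => ?_, fun hp => valley_apply_of_lt B hp ▸ orderEmbOfFin_mem _ _ _⟩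
  by_contra! hp
  have := orderEmbOfFin_mem Bᶜ rfl ⟨p - #B, by have := card_add_card_compl_fin B; omega⟩
  rw [← valley_apply_of_le B hp, mem_compl] at this
  exact this h

theorem valley_lt_valley_of_lt_card {p q : Fin n} (hpq : p < q) (hq : (q : ℕ) < #B) :
    valley B q < valley B p := by
  rw [valley_apply_of_lt B hq, valley_apply_of_lt B (Fin.lt_def.1 hpq |>.trans hq),
    OrderEmbedding.lt_iff_lt, Fin.rev_lt_rev, Fin.mk_lt_mk]
  exact hpq

theorem valley_lt_valley_of_card_le {p q : Fin n} (hp : #B ≤ p) (hpq : p < q) :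
    valley B p < valley B q := by
  rw [valley_apply_of_le B hp, valley_apply_of_le B (hp.trans hpq.le), OrderEmbedding.lt_iff_lt,
    Fin.mk_lt_mk]
  rw [Fin.lt_def] at hpq
  omega

theorem peakSet_valley : PeakSet (valley B) = ∅ := by
  refine eq_empty_iff_forall_notMem.2 fun x hx => ?_
  obtain ⟨a, b, c, hab, hbc, ha, hc, -⟩ := mem_peakSet.1 hx
  rcases lt_or_ge (b : ℕ) #B with hb | hb
  · exact lt_asymm ha (valley_lt_valley_of_lt_card B (Fin.lt_def.2 (by omega)) hb)
  · exact lt_asymm hc (valley_lt_valley_of_card_le B hb (Fin.lt_def.2 (by omega)))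

end Valley

section PeakFree

variable {n : ℕ}

theorem peakSet_nonempty_of_lt_of_gt {τ : Perm (Fin n)} {p q r : Fin n} (hpq : p < q)
    (hqr : q < r) (hp : τ p < τ q) (hr : τ r < τ q) : (PeakSet τ).Nonempty := by
  obtain ⟨s, hs, hmax⟩ := (Icc p r).exists_max_image τ ⟨q, mem_Icc.2 ⟨hpq.le, hqr.le⟩⟩
  have hq := hmax q (mem_Icc.2 ⟨hpq.le, hqr.le⟩)
  have hps : p < s := lt_of_le_of_ne (mem_Icc.1 hs).1 fun h => by subst h; exact absurd hq hp.not_ge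
  have hsr : s < r := lt_of_le_of_ne (mem_Icc.1 hs).2 fun h => by subst h; exact absurd hq hr.not_ge
  have hlt : ∀ t ∈ Icc p r, t ≠ s → τ t < τ s := fun t ht hts =>
    lt_of_le_of_ne (hmax t ht) (τ.injective.ne hts)
  rw [Fin.lt_def] at hps hsr
  refine ⟨s + 1, mem_peakSet.2 ⟨⟨s - 1, by omega⟩, s, ⟨s + 1, by omega⟩, by simp; omega, rfl,
    hlt _ ?_ ?_, hlt _ ?_ ?_, rfl⟩⟩ <;> simp [mem_Icc, Fin.le_def, Fin.ext_iff] <;> omega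

variable [NeZero n] {τ : Perm (Fin n)}

theorem zero_lt_apply_of_ne {p : Fin n} (hp : p ≠ τ.symm 0) : 0 < τ p :=
  lt_of_le_of_ne (Fin.zero_le _) fun h => hp (by rw [h, symm_apply_apply])

theorem strictAntiOn_Iic_of_peakSet_eq_empty (hτ : PeakSet τ = ∅) :
    StrictAntiOn τ (Set.Iic (τ.symm 0)) := by
  intro p _ q hq hpq
  by_contra! h
  have hqd : q ≠ τ.symm 0 := fun hqd => (zero_lt_apply_of_ne (hpq.trans_le hq).ne).not_ge
    (by rwa [hqd, apply_symm_apply] at h)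
  have := peakSet_nonempty_of_lt_of_gt hpq (lt_of_le_of_ne hq hqd)
    (lt_of_le_of_ne h (τ.injective.ne hpq.ne))
    (by rw [apply_symm_apply]; exact zero_lt_apply_of_ne hqd)
  simp [hτ] at this

theorem strictMonoOn_Ici_of_peakSet_eq_empty (hτ : PeakSet τ = ∅) :
    StrictMonoOn τ (Set.Ici (τ.symm 0)) := by
  intro p hp q _ hpq
  by_contra! h
  have hpd : p ≠ τ.symm 0 := fun hpd => (zero_lt_apply_of_ne (hp.trans_lt hpq).ne').not_ge
    (by rwa [hpd, apply_symm_apply] at h)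
  have := peakSet_nonempty_of_lt_of_gt (lt_of_le_of_ne hp (Ne.symm hpd)) hpq
    (by rw [apply_symm_apply]; exact zero_lt_apply_of_ne hpd)
    (lt_of_le_of_ne h (τ.injective.ne hpq.ne'))
  simp [hτ] at this

def leftOfMin (τ : Perm (Fin n)) : Finset (Fin n) := (Iio (τ.symm 0)).map τ.toEmbedding

theorem mem_leftOfMin {v : Fin n} : v ∈ leftOfMin τ ↔ τ.symm v < τ.symm 0 := by
  rw [leftOfMin, mem_map_equiv, mem_Iio]

theorem card_leftOfMin : #(leftOfMin τ) = τ.symm 0 := by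
  rw [leftOfMin, card_map, Fin.card_Iio]

theorem zero_notMem_leftOfMin : 0 ∉ leftOfMin τ := by
  simp [mem_leftOfMin]

theorem lt_and_lt_iff_of_peakSet_eq_empty (hτ : PeakSet τ = ∅) (p q : Fin n) :
    p < q ∧ τ q < τ p ↔ τ p ∈ leftOfMin τ ∧ τ q < τ p := by
  rw [mem_leftOfMin, symm_apply_apply]
  refine and_congr_left fun hlt => ⟨fun hpq => ?_, fun hp => ?_⟩
  · by_contra! hp
    exact hlt.not_gt (strictMonoOn_Ici_of_peakSet_eq_empty hτ hp (hp.trans hpq.le) hpq)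
  · by_contra! hqp
    have hqp' : q < p := lt_of_le_of_ne hqp fun h => by subst h; exact lt_irrefl _ hlt
    exact hlt.not_gt (strictAntiOn_Iic_of_peakSet_eq_empty hτ (hqp'.le.trans hp.le) hp.le hqp')

theorem invNum_of_peakSet_eq_empty (hτ : PeakSet τ = ∅) :
    invNum τ = ∑ v ∈ leftOfMin τ, (v : ℕ) := by
  calc invNum τ = ∑ v, ∑ w, if v ∈ leftOfMin τ ∧ w < v then 1 else 0 := by
        rw [invNum_eq_sum]
        exact Fintype.sum_equiv τ _ (fun v => ∑ w, if v ∈ leftOfMin τ ∧ w < v then 1 else 0)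
          fun p => Fintype.sum_equiv τ _ _ fun q => by
            simp only [lt_and_lt_iff_of_peakSet_eq_empty hτ]
    _ = ∑ v ∈ leftOfMin τ, (v : ℕ) := by
        simp [ite_and, filter_gt_eq_Iio]

theorem leftOfMin_valley {B : Finset (Fin n)} (h0 : 0 ∉ B) : leftOfMin (valley B) = B := by
  have hpos : ∀ w, w ∈ B ↔ ((valley B).symm w : ℕ) < #B := fun w => by
    rw [← valley_mem_iff, apply_symm_apply]
  have h0' : #B ≤ ((valley B).symm 0 : ℕ) := not_lt.1 ((hpos 0).not.1 h0)
  ext v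
  rw [mem_leftOfMin, Fin.lt_def]
  refine ⟨fun hv => ?_, fun hv => ((hpos v).1 hv).trans_le h0'⟩
  by_contra hvB
  have := valley_lt_valley_of_card_le B (not_lt.1 ((hpos v).not.1 hvB)) (Fin.lt_def.2 hv)
  rw [apply_symm_apply, apply_symm_apply] at this
  exact (Fin.zero_le v).not_gt this

theorem valley_leftOfMin (hτ : PeakSet τ = ∅) : valley (leftOfMin τ) = τ := by
  set L := leftOfMin τ
  have hL : #L = τ.symm 0 := card_leftOfMin
  have hLn : #L + #Lᶜ = n := card_add_card_compl_fin L
  ext p : 1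
  rcases lt_or_ge (p : ℕ) #L with hp | hp
  · have hf : (fun i : Fin #L => τ ⟨#L - 1 - i, by omega⟩) = L.orderEmbOfFin rfl := by
      refine orderEmbOfFin_unique rfl (fun i => ?_) fun i j hij => ?_
      · rw [mem_leftOfMin, symm_apply_apply, Fin.lt_def, ← hL, Fin.val_mk]
        omega
      · rw [Fin.lt_def] at hij
        refine strictAntiOn_Iic_of_peakSet_eq_empty hτ ?_ ?_ ?_ <;>
          simp only [Set.mem_Iic, Fin.le_def, Fin.lt_def, ← hL] <;> omega
    rw [valley_apply_of_lt L hp, ← hf]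
    exact congrArg τ (Fin.ext (by simp; omega))
  · have hg : (fun j : Fin #Lᶜ => τ ⟨#L + j, by omega⟩) = Lᶜ.orderEmbOfFin rfl := by
      refine orderEmbOfFin_unique rfl (fun j => ?_) fun i j hij => ?_
      · rw [mem_compl, mem_leftOfMin, symm_apply_apply, Fin.lt_def, ← hL, Fin.val_mk]
        omega
      · rw [Fin.lt_def] at hij
        refine strictMonoOn_Ici_of_peakSet_eq_empty hτ ?_ ?_ ?_ <;>
          simp only [Set.mem_Ici, Fin.le_def, Fin.lt_def, ← hL] <;> omega
    rw [valley_apply_of_le L hp, ← hg]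
    exact congrArg τ (Fin.ext (by simp; omega))

end PeakFree

theorem sum_pow_invNum_peakSet_eq_empty (m : ℕ) :
    ∑ τ : Perm (Fin (m + 1)) with PeakSet τ = ∅, (X : ℝ[X]) ^ invNum τ = qPoch m := by
  calc ∑ τ : Perm (Fin (m + 1)) with PeakSet τ = ∅, (X : ℝ[X]) ^ invNum τ
      = ∑ B ∈ (Ioi (0 : Fin (m + 1))).powerset, (X : ℝ[X]) ^ ∑ v ∈ B, (v : ℕ) := by
        refine sum_nbij' leftOfMin valley (fun τ _ => ?_) (fun B _ => ?_) (fun τ hτ => ?_)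
          (fun B hB => ?_) (fun τ hτ => ?_)
        · exact mem_powerset.2 fun v hv => mem_Ioi.2 <| lt_of_le_of_ne (Fin.zero_le v)
            fun h => zero_notMem_leftOfMin (h ▸ hv)
        · exact mem_filter.2 ⟨mem_univ _, peakSet_valley B⟩
        · exact valley_leftOfMin (mem_filter.1 hτ).2
        · exact leftOfMin_valley fun h => by simpa using mem_powerset.1 hB h
        · rw [invNum_of_peakSet_eq_empty (mem_filter.1 hτ).2]
    _ = ∏ v ∈ Ioi (0 : Fin (m + 1)), (1 + (X : ℝ[X]) ^ (v : ℕ)) := by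
        simp only [prod_one_add, prod_pow_eq_pow_sum]
    _ = qPoch m := by
        rw [Fin.prod_Ioi_zero, qPoch, ← Fin.prod_univ_eq_prod_range]
        simp

theorem sdiff_pair_eq_iff {α : Type*} [DecidableEq α] {T U : Finset α} {a b : α}
    (hab : ¬(a ∈ T ∧ b ∈ T)) (ha : a ∉ U) (hb : b ∉ U) :
    T \ {a, b} = U ↔ T ∈ ({U, insert a U, insert b U} : Finset (Finset α)) := by
  simp only [mem_insert, mem_singleton, Finset.ext_iff, mem_sdiff]
  grind

theorem union_image_add_eq_iff {U V W : Finset ℕ} {k : ℕ} (hW : ∀ x ∈ W, x < k) :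
    U ∪ V.image (k + ·) = W ↔ U = W ∧ V = ∅ := by
  refine ⟨fun h => ?_, fun ⟨hU, hV⟩ => by simp [hU, hV]⟩
  have hV : V = ∅ := eq_empty_iff_forall_notMem.2 fun y hy => by
    have := hW (k + y) (h ▸ mem_union_right _ (mem_image_of_mem _ hy))
    omega
  simp_all

theorem Ppoly_add_Ppoly_insert_add_Ppoly_insert_add_one {k j : ℕ} {S₁ : Finset ℕ}
    (hS₁ : ∀ x ∈ S₁, x < k) :
    Ppoly S₁ (k + (j + 1)) + Ppoly (insert k S₁) (k + (j + 1)) +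
        Ppoly (insert (k + 1) S₁) (k + (j + 1)) =
      qBinom (k + (j + 1)) k * Ppoly S₁ k * qPoch j := by
  have hk : k ∉ S₁ := fun h => (hS₁ k h).false
  have hk₁ : k + 1 ∉ S₁ := fun h => by have := hS₁ _ h; omega
  have hne : insert k S₁ ≠ insert (k + 1) S₁ := fun h => by
    have := h ▸ mem_insert_self k S₁
    simp [hk] at this
  calc _ = ∑ π : Perm (Fin (k + (j + 1))) with PeakSet π \ {k, k + 1} = S₁,
        (X : ℝ[X]) ^ invNum π := by
        rw [filter_congr fun π _ => sdiff_pair_eq_iff (not_and.2 add_one_notMem_peakSet) hk hk₁,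
          ← sum_fiberwise_eq_sum_filter, sum_insert, sum_insert, sum_singleton, add_assoc]
        · rfl
        · simp [hne]
        · simp [Ne.symm (insert_ne_self.2 hk), Ne.symm (insert_ne_self.2 hk₁)]
    _ = _ := by
        rw [sum_pow_invNum_filter_eq X _ (fun σ => PeakSet σ = S₁) (fun τ => PeakSet τ = ∅)
          fun A σ τ => by rw [peakSet_shuffle_sdiff, union_image_add_eq_iff hS₁],
          sum_pow_crossNum, sum_pow_invNum_peakSet_eq_empty]
        rfl

/-- the recurrence
`P_S(n,q) = [n choose k]_q P_{S₁}(k,q) (−q;q)_{n-k-1} − P_{S₁}(n,q) − P_{S₂}(n,q)`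
where `S₁ = S ∖ {s_r}`, `k = s_r − 1` and `S₂ = S₁ ∪ {k}` for `s_r = max S`. -/
theorem stmt11 (n : ℕ) (S : Finset ℕ) (hS : S.Nonempty)
    (hadm : ∃ π : Equiv.Perm (Fin n), PeakSet π = S) :
    Ppoly S n =
      qBinom n (S.max' hS - 1) * Ppoly (S.erase (S.max' hS)) (S.max' hS - 1) *
          qPoch (n - (S.max' hS - 1) - 1)
        - Ppoly (S.erase (S.max' hS)) n
        - Ppoly (insert (S.max' hS - 1) (S.erase (S.max' hS))) n := by
  obtain ⟨π₀, hπ₀⟩ := hadm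
  set s := S.max' hS
  have hs : s ∈ PeakSet π₀ := hπ₀ ▸ S.max'_mem hS
  have hs₁ : s - 1 + 1 = s := by have := two_le_of_mem_peakSet hs; omega
  have hk : s - 1 ∉ S := fun h => add_one_notMem_peakSet (hπ₀ ▸ h) (hs₁ ▸ hs)
  have hS₁ : ∀ x ∈ S.erase s, x < s - 1 := fun x hx => by
    have := S.le_max' x (mem_of_mem_erase hx)
    have := ne_of_mem_erase hx
    have : x ≠ s - 1 := fun h => hk (h ▸ mem_of_mem_erase hx)
    omega
  obtain ⟨j, hn⟩ : ∃ j, n = s - 1 + (j + 1) := ⟨n - s, by have := lt_of_mem_peakSet hs; omega⟩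
  have h := Ppoly_add_Ppoly_insert_add_Ppoly_insert_add_one (j := j) hS₁
  rw [← hn, hs₁, insert_erase (S.max'_mem hS)] at h
  rw [show n - (s - 1) - 1 = j by omega]
  linear_combination h

end
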